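/- For every natural number m and positive integer n, the Hankel determinant det(C_{i+j+m})_{i,j=0}^{n-1} equals the product over all pairs 1 ≤ i ≤ j ≤ m−1 of (2n+i+j)/(i+j). -/

import Mathlib

/-!
Write `H m n` for the Hankel determinant and `P m x` for the product, evaluated at `x = n`. Both
satisfy the Desnanot–Jacobi recurrence
`H m (n+2) * H (m+2) n = H m (n+1) * H (m+2) (n+1) - H (m+1) (n+1)²`,
both equal `1` at `n = 0` and `C_m` at `n = 1`, and `P (m+2) n > 0`; so the recurrence forces
`H = P`.

For Hankel matrices the recurrence is Dodgson condensation, which follows from the Schur complement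
of the interior block. For the product, `P (m+1) x = P m x * R m x` with
`R m x = ∏_{i=1}^m (2x+i+m)/(i+m)` (`columnFactor`), and `R` obeys two first order relations:
one in `m`, and one trading `m + 1` for `x + 1`. They give
`P m (x+2) * P (m+2) x * (2x+m+3)(2m+1) = (x+1)(2x+3) * P (m+1) (x+1)²` by induction on `m`,
which is the recurrence in disguise.
-/

open Matrix Finset

namespace Matrix

variable {R ι : Type*} [CommRing R] [Fintype ι] [DecidableEq ι]

abbrev interiorWith (p : Fin 2) : ι ⊕ Fin 1 → ι ⊕ Fin 2 := Sum.map id fun _ => p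

lemma det_submatrix_interiorWith (M : Matrix (ι ⊕ Fin 2) (ι ⊕ Fin 2) R)
    [Invertible M.toBlocks₁₁] (p q : Fin 2) :
    (M.submatrix (interiorWith p) (interiorWith q)).det =
      M.toBlocks₁₁.det *
        (M.toBlocks₂₂ - M.toBlocks₂₁ * ⅟M.toBlocks₁₁ * M.toBlocks₁₂) p q := by
  have hblocks : M.submatrix (interiorWith p) (interiorWith q) =
      fromBlocks M.toBlocks₁₁ (M.toBlocks₁₂.submatrix id fun _ => q)
        (M.toBlocks₂₁.submatrix (fun _ => p) id)
        (M.toBlocks₂₂.submatrix (fun _ => p) fun _ => q) := by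
    ext (i | i) (j | j) <;> rfl
  rw [hblocks, det_fromBlocks₁₁, det_fin_one]
  simp [mul_apply]

theorem det_mul_det_toBlocks₁₁ (M : Matrix (ι ⊕ Fin 2) (ι ⊕ Fin 2) R)
    (h : IsUnit M.toBlocks₁₁.det) :
    M.det * M.toBlocks₁₁.det =
      (M.submatrix (interiorWith 0) (interiorWith 0)).det *
          (M.submatrix (interiorWith 1) (interiorWith 1)).det -
        (M.submatrix (interiorWith 0) (interiorWith 1)).det *
          (M.submatrix (interiorWith 1) (interiorWith 0)).det := by
  let := M.toBlocks₁₁.invertibleOfIsUnitDet h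
  have hM : M.det = M.toBlocks₁₁.det *
      (M.toBlocks₂₂ - M.toBlocks₂₁ * ⅟M.toBlocks₁₁ * M.toBlocks₁₂).det := by
    conv_lhs => rw [← fromBlocks_toBlocks M]
    exact det_fromBlocks₁₁ ..
  simp only [hM, det_submatrix_interiorWith, det_fin_two]
  ring

lemma det_submatrix_mul_det_submatrix_swap {κ : Type*} [Fintype κ] [DecidableEq κ]
    (A B : Matrix κ κ R) (e f : ι ≃ κ) :
    (A.submatrix e f).det * (B.submatrix f e).det = A.det * B.det := by
  have hA : A.submatrix e f = (A.submatrix e e).submatrix id (f.trans e.symm) := by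
    ext i j; simp
  have hB : B.submatrix f e = (B.submatrix e e).submatrix (f.trans e.symm) id := by
    ext i j; simp
  rw [hA, hB, det_permute', det_permute, det_submatrix_equiv_self, det_submatrix_equiv_self,
    mul_mul_mul_comm, ← Int.cast_mul, ← Units.val_mul, Int.units_mul_self]
  simp

theorem desnanot_jacobi {n : ℕ} (M : Matrix (Fin (n + 2)) (Fin (n + 2)) R)
    (h : IsUnit (M.submatrix (fun i : Fin n => i.castSucc.succ) fun i => i.castSucc.succ).det) :
    M.det * (M.submatrix (fun i : Fin n => i.castSucc.succ) fun i => i.castSucc.succ).det =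
      (M.submatrix Fin.succ Fin.succ).det * (M.submatrix Fin.castSucc Fin.castSucc).det -
        (M.submatrix Fin.succ Fin.castSucc).det * (M.submatrix Fin.castSucc Fin.succ).det := by
  -- `e` sends `Fin n` to the interior, border `0` to the last index and border `1` to the first
  let e : Fin n ⊕ Fin 2 ≃ Fin (n + 2) := finSumFinEquiv.trans (finRotate (n + 2))
  let g : Fin n ⊕ Fin 1 ≃ Fin (n + 1) := finSumFinEquiv
  let g' : Fin n ⊕ Fin 1 ≃ Fin (n + 1) := finSumFinEquiv.trans (finRotate (n + 1))
  have he : ⇑e ∘ Sum.inl = fun i : Fin n => i.castSucc.succ := by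
    ext i; simp [e, Fin.val_add_one, Fin.ext_iff]; omega
  have he₀ : ⇑e ∘ interiorWith 0 = Fin.succ ∘ ⇑g := by
    ext (i | i)
    · simp [e, g, Fin.val_add_one, Fin.ext_iff]; omega
    · simp [e, g, Fin.val_add_one, Fin.ext_iff]
  have he₁ : ⇑e ∘ interiorWith 1 = Fin.castSucc ∘ ⇑g' := by
    ext (i | i)
    · simp [e, g', Fin.val_add_one, Fin.ext_iff]; split_ifs <;> omega
    · simp [e, g', Fin.val_add_one, Fin.ext_iff, Fin.val_eq_zero]
  have hinterior :
      (M.submatrix e e).toBlocks₁₁ = M.submatrix (⇑e ∘ Sum.inl) (⇑e ∘ Sum.inl) := rfl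
  have key := det_mul_det_toBlocks₁₁ (M.submatrix e e) (by rwa [hinterior, he])
  simp only [submatrix_submatrix, det_submatrix_equiv_self, hinterior, he, he₀, he₁] at key
  rw [key]
  simp only [← submatrix_submatrix, det_submatrix_equiv_self,
    det_submatrix_mul_det_submatrix_swap]

def hankel {α : Type*} (a : ℕ → α) (n : ℕ) : Matrix (Fin n) (Fin n) α :=
  of fun i j => a (i + j)

lemma hankel_submatrix {α : Type*} (a : ℕ → α) {k n : ℕ} (f g : Fin k → Fin n) (s : ℕ)
    (h : ∀ i j, (f i : ℕ) + g j = i + j + s) :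
    (hankel a n).submatrix f g = hankel (fun l => a (l + s)) k := by
  ext i j
  simp [hankel, h]

theorem det_hankel_desnanot_jacobi (a : ℕ → R) (n : ℕ)
    (h : IsUnit (hankel (fun k => a (k + 2)) n).det) :
    (hankel a (n + 2)).det * (hankel (fun k => a (k + 2)) n).det =
      (hankel a (n + 1)).det * (hankel (fun k => a (k + 2)) (n + 1)).det -
        (hankel (fun k => a (k + 1)) (n + 1)).det ^ 2 := by
  have hinterior := hankel_submatrix a (fun i : Fin n => i.castSucc.succ)
    (fun i => i.castSucc.succ) 2 fun i j => by simp only [Fin.val_succ, Fin.val_castSucc]; omega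
  have h₀₀ := hankel_submatrix a (n := n + 2) Fin.succ Fin.succ 2 fun i j => by
    simp only [Fin.val_succ]; omega
  have h₁₁ := hankel_submatrix a (n := n + 2) Fin.castSucc Fin.castSucc 0 fun i j => rfl
  have h₀₁ := hankel_submatrix a (n := n + 2) Fin.succ Fin.castSucc 1 fun i j => by
    simp only [Fin.val_succ, Fin.val_castSucc]; omega
  have h₁₀ := hankel_submatrix a (n := n + 2) Fin.castSucc Fin.succ 1 fun i j => by
    simp only [Fin.val_succ, Fin.val_castSucc]; omega
  have key := desnanot_jacobi (hankel a (n + 2)) (by rwa [hinterior])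
  simp only [add_zero] at h₁₁
  rw [hinterior, h₀₀, h₁₁, h₀₁, h₁₀] at key
  rw [key]
  ring

end Matrix

def columnProd (c : ℚ) (m : ℕ) : ℚ := ∏ k ∈ range m, (c + m + 1 + k)

lemma columnProd_pos {c : ℚ} (hc : 0 ≤ c) (m : ℕ) : 0 < columnProd c m :=
  prod_pos fun _ _ => by positivity

lemma columnProd_succ (c : ℚ) (m : ℕ) :
    columnProd c (m + 1) = (c + m + 2) * columnProd (c + 2) m := by
  rw [columnProd, prod_range_succ', columnProd, mul_comm]
  congr 1
  · push_cast; ring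
  · exact prod_congr rfl fun k _ => by push_cast; ring

lemma columnProd_succ_mul (c : ℚ) (m : ℕ) :
    columnProd c (m + 1) * (c + m + 1) =
      columnProd c m * ((c + 2 * m + 1) * (c + 2 * m + 2)) := by
  have hlong : columnProd c m * (c + 2 * m + 1) = ∏ k ∈ range (m + 1), (c + m + 1 + k) := by
    rw [prod_range_succ, columnProd]; ring
  rw [← mul_assoc, hlong, prod_range_succ', columnProd, prod_range_succ]
  have hterm (k : ℕ) : c + ((m : ℚ) + 1) + 1 + k = c + m + 1 + (k + 1) := by ring
  push_cast
  simp only [hterm]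
  ring

lemma columnProd_zero_succ (m : ℕ) : columnProd 0 (m + 1) = 2 * (2 * m + 1) * columnProd 0 m := by
  have h := columnProd_succ_mul 0 m
  refine mul_right_cancel₀ (show (0 : ℚ) + m + 1 ≠ 0 by positivity) ?_
  linear_combination h

def columnFactor (m : ℕ) (x : ℚ) : ℚ := columnProd (2 * x) m / columnProd 0 m

lemma columnFactor_zero_right (m : ℕ) : columnFactor m 0 = 1 := by
  rw [columnFactor, mul_zero, div_self (columnProd_pos le_rfl m).ne']

lemma columnFactor_pos (m : ℕ) {x : ℚ} (hx : 0 ≤ x) : 0 < columnFactor m x :=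
  div_pos (columnProd_pos (by positivity) m) (columnProd_pos le_rfl m)

lemma columnFactor_succ_mul (m : ℕ) (x : ℚ) :
    columnFactor (m + 1) x * ((2 * x + m + 1) * (2 * m + 1)) =
      columnFactor m x * ((2 * x + 2 * m + 1) * (x + m + 1)) := by
  have h := columnProd_succ_mul (2 * x) m
  have h₀ := (columnProd_pos le_rfl m).ne'
  rw [columnFactor, columnFactor, columnProd_zero_succ]
  field_simp
  linear_combination h

lemma columnFactor_succ_shift (m : ℕ) (x : ℚ) :
    columnFactor (m + 1) x * (2 * (2 * m + 1)) = (2 * x + m + 2) * columnFactor m (x + 1) := by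
  have h₀ := (columnProd_pos le_rfl m).ne'
  rw [columnFactor, columnFactor, columnProd_zero_succ, columnProd_succ,
    show 2 * x + 2 = 2 * (x + 1) by ring]
  field_simp

lemma add_two_mul_catalan_succ (m : ℕ) :
    (m + 2) * catalan (m + 1) = 2 * (2 * m + 1) * catalan m := by
  refine Nat.eq_of_mul_eq_mul_left (show 0 < m + 1 by omega) ?_
  have h₁ := succ_mul_catalan_eq_centralBinom (m + 1)
  have h₂ := succ_mul_catalan_eq_centralBinom m
  have h₃ := Nat.succ_mul_centralBinom_succ m
  rw [show m + 1 + 1 = m + 2 by rfl] at h₁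
  rw [h₁, h₃, ← h₂]
  ring

def hankelProduct (m : ℕ) (x : ℚ) : ℚ :=
  ∏ i ∈ Icc 1 (m - 1), ∏ j ∈ Icc i (m - 1), (2 * x + i + j) / ((i : ℚ) + j)

lemma hankelProduct_eq_prod_range (m : ℕ) (x : ℚ) :
    hankelProduct m x = ∏ j ∈ range m, columnFactor j x := by
  rw [hankelProduct,
    prod_comm' (t' := range m) (s' := fun j => Icc 1 j) fun i j => by
      simp only [mem_Icc, mem_range]; omega]
  refine prod_congr rfl fun j _ => ?_
  rw [columnFactor, columnProd, columnProd, ← prod_div_distrib, ← Ico_add_one_right_eq_Icc,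
    prod_Ico_eq_prod_range, Nat.add_sub_cancel]
  exact prod_congr rfl fun k _ => by push_cast; ring_nf

lemma hankelProduct_succ (m : ℕ) (x : ℚ) :
    hankelProduct (m + 1) x = hankelProduct m x * columnFactor m x := by
  simp only [hankelProduct_eq_prod_range, prod_range_succ]

lemma hankelProduct_pos (m : ℕ) {x : ℚ} (hx : 0 ≤ x) : 0 < hankelProduct m x := by
  rw [hankelProduct_eq_prod_range]
  exact prod_pos fun j _ => columnFactor_pos j hx

lemma hankelProduct_zero_right (m : ℕ) : hankelProduct m 0 = 1 := by
  simp [hankelProduct_eq_prod_range, columnFactor_zero_right]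

lemma hankelProduct_one_right (m : ℕ) : hankelProduct m 1 = catalan m := by
  induction m with
  | zero => simp [hankelProduct_eq_prod_range]
  | succ m ih =>
    have hshift := columnFactor_succ_shift m 0
    have hcat : ((m : ℚ) + 2) * catalan (m + 1) = 2 * (2 * m + 1) * catalan m := by
      exact_mod_cast add_two_mul_catalan_succ m
    rw [columnFactor_zero_right, zero_add] at hshift
    refine mul_left_cancel₀ (show (m : ℚ) + 2 ≠ 0 by positivity) ?_
    rw [hankelProduct_succ, ih, hcat]
    linear_combination -(catalan m : ℚ) * hshift

lemma hankelProduct_two (x : ℚ) : hankelProduct 2 x = x + 1 := by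
  simp only [hankelProduct_eq_prod_range, prod_range_succ, columnFactor, columnProd, range_one,
    range_zero, prod_singleton, prod_empty]
  push_cast
  ring

lemma hankelProduct_condensation (m : ℕ) (x : ℚ) :
    hankelProduct m (x + 2) * hankelProduct (m + 2) x * ((2 * x + m + 3) * (2 * m + 1)) =
      (x + 1) * (2 * x + 3) * hankelProduct (m + 1) (x + 1) ^ 2 := by
  induction m with
  | zero =>
    rw [hankelProduct_two]
    simp [hankelProduct_eq_prod_range, columnFactor, columnProd]
  | succ m ih =>
    have h₁ := columnFactor_succ_shift m (x + 1)
    have h₂ := columnFactor_succ_shift (m + 1) x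
    rw [show x + 1 + 1 = x + 2 by ring] at h₁
    rw [show m + 1 + 2 = m + 2 + 1 from rfl, hankelProduct_succ m (x + 2),
      hankelProduct_succ (m + 2) x, hankelProduct_succ (m + 1) (x + 1)]
    push_cast at h₁ h₂ ⊢
    linear_combination
      -(2 * m + 3) * columnFactor (m + 2) x *
          hankelProduct m (x + 2) * hankelProduct (m + 2) x * h₁
      + (2 * m + 1) * columnFactor (m + 1) (x + 1) *
          hankelProduct m (x + 2) * hankelProduct (m + 2) x * h₂
      + columnFactor (m + 1) (x + 1) ^ 2 * ih

lemma hankelProduct_desnanot_jacobi (m : ℕ) {x : ℚ} (hx : 0 ≤ x) :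
    hankelProduct m (x + 2) * hankelProduct (m + 2) x =
      hankelProduct m (x + 1) * hankelProduct (m + 2) (x + 1) -
        hankelProduct (m + 1) (x + 1) ^ 2 := by
  have hcond := hankelProduct_condensation m x
  have hsucc := columnFactor_succ_mul m (x + 1)
  refine mul_right_cancel₀ (show (2 * x + m + 3) * (2 * (m : ℚ) + 1) ≠ 0 by positivity) ?_
  rw [hankelProduct_succ (m + 1) (x + 1)]
  rw [hankelProduct_succ m (x + 1)] at hcond ⊢
  linear_combination hcond - (hankelProduct m (x + 1) ^ 2 * columnFactor m (x + 1)) * hsucc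

theorem det_hankel_catalan (m n : ℕ) :
    (hankel (fun k => (catalan (k + m) : ℚ)) n).det = hankelProduct m n := by
  have hshift (m s : ℕ) :
      (fun k => (catalan (k + s + m) : ℚ)) = fun k => (catalan (k + (m + s)) : ℚ) := by
    funext k; rw [add_assoc, add_comm s m]
  induction n using Nat.twoStepInduction generalizing m with
  | zero => simp [hankelProduct_zero_right]
  | one => simp [hankel, hankelProduct_one_right]
  | more n ih₀ ih₁ =>
    have hpos := hankelProduct_pos (m + 2) n.cast_nonneg
    have hdj := det_hankel_desnanot_jacobi (fun k => (catalan (k + m) : ℚ)) n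
    simp only [hshift, ih₀, ih₁] at hdj
    specialize hdj (isUnit_iff_ne_zero.2 hpos.ne')
    push_cast at hdj ⊢
    rw [← hankelProduct_desnanot_jacobi m n.cast_nonneg] at hdj
    exact mul_right_cancel₀ hpos.ne' hdj

theorem stmt4_general (m n : ℕ) :
    Matrix.det (Matrix.of fun i j : Fin n => (catalan (i + j + m) : ℚ)) =
      ∏ i ∈ Finset.Icc 1 (m - 1), ∏ j ∈ Finset.Icc i (m - 1),
        (2 * (n : ℚ) + i + j) / ((i : ℚ) + j) :=
  det_hankel_catalan m n

/-- For every natural number `m` and positive integer `n`, the Hankel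
determinant `det (C_{i+j+m})_{i,j=0}^{n-1}` equals the product over all pairs
`1 ≤ i ≤ j ≤ m-1` of `(2n+i+j)/(i+j)` (empty product for `m ≤ 1`). -/
theorem stmt4 (m n : ℕ) (hn : 1 ≤ n) :
    Matrix.det (Matrix.of fun i j : Fin n => (catalan (i + j + m) : ℚ)) =
      ∏ i ∈ Finset.Icc 1 (m - 1), ∏ j ∈ Finset.Icc i (m - 1),
        (2 * (n : ℚ) + i + j) / ((i : ℚ) + j) :=
  stmt4_general m n
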